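/- Let ψ be a continuous frame for H, w a continuous weight whose associated weight m := m_w is admissible, ‖R‖_{A_m} < ∞, and suppose ψ has property D[δ,m] with respect to a moderate admissible covering U = (U_i)_{i∈I} with finite-overlap constant N and cover constant C_{m,U}. Choose points x_i ∈ U_i and a partition of unity (φ_i)_{i∈I} subordinate to U (measurable, 0 ≤ φ_i ≤ 1, supp φ_i ⊂ U_i, Σ_i φ_i ≡ 1 on X). Set σ := max{C_{m,U}·‖R‖_{A_m}, ‖R‖_{A_m} + δ}. Then for each 1 ≤ p ≤ ∞ and every F ∈ L^p_w satisfying F = R(F) almost everywhere (where R(F)(x) := ∫_X F(y)R(x,y)dμ(y) is the continuous representative): ‖Σ_{i∈I} R(F)(x_i) χ_{U_i}‖_{L^p_w} ≤ N·σ·‖F‖_{L^p_w} and ‖Σ_{i∈I} R(F)(x_i) φ_i‖_{L^p_w} ≤ σ·‖F‖_{L^p_w}. -/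

import Mathlib

open MeasureTheory ENNReal
open scoped ENNReal NNReal

noncomputable section

local notation "⟪" x ", " y "⟫" => @inner ℂ _ _ x y

/-- The weight on `X × X` associated to a weight `w` on `X`. -/
def mw {X : Type*} (w : X → ℝ) (x y : X) : ℝ :=
  max (w x / w y) (w y / w x)

/-- The norm of the Banach algebra `A_m` of kernels on `X × X`. -/
def amNorm {X : Type*} [MeasurableSpace X] (μ : MeasureTheory.Measure X)
    (m K : X → X → ℝ) : ℝ≥0∞ :=
  max (essSup (fun x => ∫⁻ y, ENNReal.ofReal (|K x y| * m x y) ∂μ) μ)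
      (essSup (fun y => ∫⁻ x, ENNReal.ofReal (|K x y| * m x y) ∂μ) μ)

/-- The oscillation kernel `osc_U(x,y) = sup_{z ∈ Q_y} |R(x,y) − R(x,z)|`, where
`Q_y = ∪_{i : y ∈ U_i} U_i`. -/
def oscU {X I : Type*} (R : X → X → ℂ) (U : I → Set X) (x y : X) : ℝ :=
  sSup ((fun z => ‖R x y - R x z‖) '' ⋃ (i : I) (_ : y ∈ U i), U i)

/-- The `L^p_w`-norm (as a value in `ℝ≥0∞`). -/
def lpwNorm {X : Type*} [MeasurableSpace X] {E : Type*} [NormedAddCommGroup E]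
    (μ : MeasureTheory.Measure X) (w : X → ℝ) (p : ℝ≥0∞) (F : X → E) : ℝ≥0∞ :=
  MeasureTheory.eLpNorm (fun x => ‖F x‖ * w x) p μ

/-- A moderate admissible covering `U = (U_i)_{i∈I}` of `X`. -/
structure ModCover (X : Type*) [TopologicalSpace X] [MeasurableSpace X]
    (μ : MeasureTheory.Measure X) (I : Type*) where
  U : I → Set X
  measU : ∀ i, MeasurableSet (U i)
  relCompact : ∀ i, IsCompact (closure (U i))
  interiorNonempty : ∀ i, (interior (U i)).Nonempty
  covers : (⋃ i, U i) = Set.univ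
  N : ℕ
  overlapFin : ∀ j : I, {i : I | (U i ∩ U j).Nonempty}.Finite
  overlapBound : ∀ j : I, {i : I | (U i ∩ U j).Nonempty}.ncard ≤ N
  measLower : ℝ≥0∞
  measLowerPos : 0 < measLower
  lower : ∀ i, measLower ≤ μ (U i)
  finiteMeas : ∀ i, μ (U i) < ⊤
  Ctilde : ℝ≥0∞
  CtildeFin : Ctilde < ⊤
  moderate : ∀ i j, (U i ∩ U j).Nonempty → μ (U i) ≤ Ctilde * μ (U j)

/-! Each sampled coefficient `R(F)(xᵢ) = ∫ F(y) R(xᵢ, y) dμ(y)` is bounded by `∫ |F| |R(xᵢ, ·)|`,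
and for `x ∈ Uᵢ` Hermitian symmetry of `R` turns the oscillation in the second variable into
`|R(xᵢ, y)| ≤ |R(x, y)| + osc_U(y, x)`. Both sampling operators are therefore dominated by the
positive kernel `c₀ (|R| + osc_Uᵀ)`, where `c₀ = N` bounds the overlap of the indicators and
`c₀ = 1` is the sum of the partition of unity. Since `w(x) ≤ m_w(x, y) w(y)`, the weighted
`L^p_w` estimate reduces to the Schur test for the kernel multiplied by `m_w`, whose row and
column integrals are at most `c₀ (‖R‖_{A_m} + ‖osc_U‖_{A_m}) ≤ c₀ σ`. -/

section SchurTest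

variable {X : Type*} [MeasurableSpace X] {μ : Measure X}

theorem lintegral_mul_rpow_le {r : ℝ} (hr : 1 ≤ r) {κ v : X → ℝ≥0∞}
    (hκ : AEMeasurable κ μ) (hv : AEMeasurable v μ) :
    (∫⁻ y, κ y * v y ∂μ) ^ r ≤ (∫⁻ y, κ y ∂μ) ^ (r - 1) * ∫⁻ y, κ y * v y ^ r ∂μ := by
  have hr0 : 0 < r := by linarith
  have hsplit : ∀ y, κ y * v y = κ y ^ (1 - r⁻¹) * (κ y * v y ^ r) ^ r⁻¹ := fun y => by
    rw [ENNReal.mul_rpow_of_nonneg _ _ (by positivity), ← ENNReal.rpow_mul,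
      mul_inv_cancel₀ hr0.ne', ENNReal.rpow_one, ← mul_assoc,
      ← ENNReal.rpow_add_of_nonneg _ _ (by simp [inv_le_one_of_one_le₀ hr]) (by positivity),
      sub_add_cancel, ENNReal.rpow_one]
  -- Hölder's inequality with the exponents `r / (r - 1)` and `r` for the measure `κ μ`
  have hHolder := ENNReal.lintegral_mul_norm_pow_le hκ (hκ.mul (hv.pow_const r))
    (sub_nonneg.2 (inv_le_one_of_one_le₀ hr)) (inv_nonneg.2 hr0.le) (sub_add_cancel 1 r⁻¹)
  calc (∫⁻ y, κ y * v y ∂μ) ^ r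
      = (∫⁻ y, κ y ^ (1 - r⁻¹) * (κ y * v y ^ r) ^ r⁻¹ ∂μ) ^ r := by simp_rw [← hsplit]
    _ ≤ ((∫⁻ y, κ y ∂μ) ^ (1 - r⁻¹) * (∫⁻ y, κ y * v y ^ r ∂μ) ^ r⁻¹) ^ r :=
      ENNReal.rpow_le_rpow hHolder hr0.le
    _ = (∫⁻ y, κ y ∂μ) ^ (r - 1) * ∫⁻ y, κ y * v y ^ r ∂μ := by
      rw [ENNReal.mul_rpow_of_nonneg _ _ hr0.le, ← ENNReal.rpow_mul, ← ENNReal.rpow_mul,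
        inv_mul_cancel₀ hr0.ne', ENNReal.rpow_one, sub_mul, one_mul,
        inv_mul_cancel₀ hr0.ne']

variable [SFinite μ] {κ : X → X → ℝ≥0∞} {v : X → ℝ≥0∞} {C : ℝ≥0∞}

theorem lintegral_rpow_lintegral_kernel_le (hκ : Measurable (Function.uncurry κ))
    (hv : AEMeasurable v μ) (hrow : ∀ᵐ x ∂μ, ∫⁻ y, κ x y ∂μ ≤ C)
    (hcol : ∀ᵐ y ∂μ, ∫⁻ x, κ x y ∂μ ≤ C) {r : ℝ} (hr : 1 ≤ r) :
    ∫⁻ x, (∫⁻ y, κ x y * v y ∂μ) ^ r ∂μ ≤ C ^ r * ∫⁻ y, v y ^ r ∂μ := by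
  have hκv : AEMeasurable (Function.uncurry fun x y => κ x y * v y ^ r) (μ.prod μ) :=
    hκ.aemeasurable.mul (hv.pow_const r).comp_snd
  calc ∫⁻ x, (∫⁻ y, κ x y * v y ∂μ) ^ r ∂μ
      ≤ ∫⁻ x, C ^ (r - 1) * ∫⁻ y, κ x y * v y ^ r ∂μ ∂μ := by
        refine lintegral_mono_ae (hrow.mono fun x hx => ?_)
        exact (lintegral_mul_rpow_le hr hκ.of_uncurry_left.aemeasurable hv).trans
          (mul_le_mul_left (ENNReal.rpow_le_rpow hx (by linarith)) _)
    _ = C ^ (r - 1) * ∫⁻ y, (∫⁻ x, κ x y ∂μ) * v y ^ r ∂μ := by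
        rw [lintegral_const_mul'' (f := fun x => ∫⁻ y, κ x y * v y ^ r ∂μ) _
          hκv.lintegral_prod_right', lintegral_lintegral_swap hκv]
        simp_rw [lintegral_mul_const _ hκ.of_uncurry_right]
    _ ≤ C ^ (r - 1) * ∫⁻ y, C * v y ^ r ∂μ := by
        gcongr _ * ?_
        exact lintegral_mono_ae (hcol.mono fun y hy => mul_le_mul_left hy _)
    _ = C ^ r * ∫⁻ y, v y ^ r ∂μ := by
        rw [lintegral_const_mul'' _ (hv.pow_const r), ← mul_assoc]
        congr 1
        conv_rhs => rw [← sub_add_cancel r 1,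
          ENNReal.rpow_add_of_nonneg _ _ (by linarith) zero_le_one, ENNReal.rpow_one]

theorem eLpNorm_lintegral_kernel_le (hκ : Measurable (Function.uncurry κ))
    (hv : AEMeasurable v μ) (hrow : ∀ᵐ x ∂μ, ∫⁻ y, κ x y ∂μ ≤ C)
    (hcol : ∀ᵐ y ∂μ, ∫⁻ x, κ x y ∂μ ≤ C) {p : ℝ≥0∞} (hp : 1 ≤ p) :
    eLpNorm (fun x => ∫⁻ y, κ x y * v y ∂μ) p μ ≤ C * eLpNorm v p μ := by
  rcases eq_or_ne p ∞ with rfl | hp_top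
  · simp only [eLpNorm_exponent_top, eLpNormEssSup, enorm_eq_self]
    refine essSup_le_of_ae_le _ (hrow.mono fun x hx => ?_)
    calc ∫⁻ y, κ x y * v y ∂μ ≤ ∫⁻ y, κ x y * essSup v μ ∂μ :=
          lintegral_mono_ae ((ENNReal.ae_le_essSup v).mono fun y hy => mul_le_mul_right hy _)
      _ = (∫⁻ y, κ x y ∂μ) * essSup v μ := lintegral_mul_const _ hκ.of_uncurry_left
      _ ≤ C * essSup v μ := mul_le_mul_left hx _
  have hp0 : p ≠ 0 := (zero_lt_one.trans_le hp).ne'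
  have hr : 1 ≤ p.toReal := by
    simpa using ENNReal.toReal_mono hp_top hp
  have hr0 : 0 < p.toReal := by linarith
  simp only [eLpNorm_eq_lintegral_rpow_enorm_toReal hp0 hp_top, enorm_eq_self]
  calc (∫⁻ x, (∫⁻ y, κ x y * v y ∂μ) ^ p.toReal ∂μ) ^ (1 / p.toReal)
      ≤ (C ^ p.toReal * ∫⁻ y, v y ^ p.toReal ∂μ) ^ (1 / p.toReal) :=
        ENNReal.rpow_le_rpow (lintegral_rpow_lintegral_kernel_le hκ hv hrow hcol hr) (by positivity)
    _ = C * (∫⁻ y, v y ^ p.toReal ∂μ) ^ (1 / p.toReal) := by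
        rw [ENNReal.mul_rpow_of_nonneg _ _ (by positivity), ← ENNReal.rpow_mul,
          mul_one_div_cancel hr0.ne', ENNReal.rpow_one]

end SchurTest

section WeightedKernel

variable {X : Type*} [MeasurableSpace X] {μ : Measure X}

theorem lpwNorm_eq_eLpNorm_enorm_mul {E : Type*} [NormedAddCommGroup E] {w : X → ℝ}
    (hw : ∀ x, 0 ≤ w x) (p : ℝ≥0∞) (F : X → E) :
    lpwNorm μ w p F = eLpNorm (fun x => ‖F x‖ₑ * ENNReal.ofReal (w x)) p μ :=
  eLpNorm_congr_enorm_ae <| ae_of_all _ fun x => by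
    simp only [enorm_mul, enorm_norm, Real.enorm_of_nonneg (hw x), enorm_eq_self]

theorem lpwNorm_le_of_enorm_le_lintegral_kernel [SFinite μ] {E E' : Type*}
    [NormedAddCommGroup E] [NormedAddCommGroup E'] {w : X → ℝ} (hw : Measurable w)
    (hw0 : ∀ x, 0 ≤ w x) {m : X → X → ℝ} (hm : Measurable (Function.uncurry m))
    (hwm : ∀ x y, w x ≤ m x y * w y) {κ : X → X → ℝ≥0∞} (hκ : Measurable (Function.uncurry κ))
    {C : ℝ≥0∞} (hrow : ∀ᵐ x ∂μ, ∫⁻ y, κ x y * ENNReal.ofReal (m x y) ∂μ ≤ C)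
    (hcol : ∀ᵐ y ∂μ, ∫⁻ x, κ x y * ENNReal.ofReal (m x y) ∂μ ≤ C)
    {F : X → E} (hF : AEStronglyMeasurable F μ) {G : X → E'}
    (hG : ∀ x, ‖G x‖ₑ ≤ ∫⁻ y, κ x y * ‖F y‖ₑ ∂μ) {p : ℝ≥0∞} (hp : 1 ≤ p) :
    lpwNorm μ w p G ≤ C * lpwNorm μ w p F := by
  rw [lpwNorm_eq_eLpNorm_enorm_mul hw0, lpwNorm_eq_eLpNorm_enorm_mul hw0]
  refine le_trans (eLpNorm_mono_enorm fun x => ?_) (eLpNorm_lintegral_kernel_le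
    (hκ.mul (ENNReal.measurable_ofReal.comp hm)) (hF.enorm.mul hw.ennreal_ofReal.aemeasurable)
    hrow hcol hp)
  simp only [enorm_eq_self]
  calc ‖G x‖ₑ * ENNReal.ofReal (w x)
      ≤ (∫⁻ y, κ x y * ‖F y‖ₑ ∂μ) * ENNReal.ofReal (w x) := mul_le_mul_left (hG x) _
    _ = ∫⁻ y, κ x y * ‖F y‖ₑ * ENNReal.ofReal (w x) ∂μ :=
      (lintegral_mul_const' _ _ ENNReal.ofReal_ne_top).symm
    _ ≤ ∫⁻ y, κ x y * ENNReal.ofReal (m x y) * (‖F y‖ₑ * ENNReal.ofReal (w y)) ∂μ := by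
      refine lintegral_mono fun y => ?_
      calc κ x y * ‖F y‖ₑ * ENNReal.ofReal (w x)
          ≤ κ x y * ‖F y‖ₑ * ENNReal.ofReal (m x y * w y) :=
            mul_le_mul_right (ENNReal.ofReal_le_ofReal (hwm x y)) _
        _ = κ x y * ENNReal.ofReal (m x y) * (‖F y‖ₑ * ENNReal.ofReal (w y)) := by
            rw [ENNReal.ofReal_mul' (hw0 y)]; ring

theorem ae_lintegral_le_amNorm_left (m K : X → X → ℝ) :
    ∀ᵐ x ∂μ, ∫⁻ y, ENNReal.ofReal (|K x y| * m x y) ∂μ ≤ amNorm μ m K :=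
  (ENNReal.ae_le_essSup _).mono fun _ hx => hx.trans (le_max_left _ _)

theorem ae_lintegral_le_amNorm_right (m K : X → X → ℝ) :
    ∀ᵐ y ∂μ, ∫⁻ x, ENNReal.ofReal (|K x y| * m x y) ∂μ ≤ amNorm μ m K :=
  (ENNReal.ae_le_essSup _).mono fun _ hy => hy.trans (le_max_right _ _)

end WeightedKernel

section DominatedKernel

variable {X : Type*} {m K₁ K₂ : X → X → ℝ} {κ : X → X → ℝ≥0∞} {c : ℝ≥0∞}

theorem kernel_mul_ofReal_le (hm : ∀ x y, m x y = m y x)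
    (hκ : ∀ x y, κ x y ≤ c * (ENNReal.ofReal |K₁ x y| + ENNReal.ofReal |K₂ y x|)) (x y : X) :
    κ x y * ENNReal.ofReal (m x y) ≤
      c * (ENNReal.ofReal (|K₁ x y| * m x y) + ENNReal.ofReal (|K₂ y x| * m y x)) := by
  rw [ENNReal.ofReal_mul (abs_nonneg _), ENNReal.ofReal_mul (abs_nonneg _), hm y x, ← add_mul,
    ← mul_assoc]
  exact mul_le_mul_left (hκ x y) _

variable [MeasurableSpace X] {μ : Measure X}

theorem ae_lintegral_kernel_le_left (hm_meas : Measurable (Function.uncurry m))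
    (hm : ∀ x y, m x y = m y x) (hK₁ : ∀ x, Measurable (K₁ x)) (hc : c ≠ ⊤)
    (hκ : ∀ x y, κ x y ≤ c * (ENNReal.ofReal |K₁ x y| + ENNReal.ofReal |K₂ y x|)) :
    ∀ᵐ x ∂μ, ∫⁻ y, κ x y * ENNReal.ofReal (m x y) ∂μ ≤
      c * (amNorm μ m K₁ + amNorm μ m K₂) := by
  filter_upwards [ae_lintegral_le_amNorm_left (μ := μ) m K₁,
    ae_lintegral_le_amNorm_right (μ := μ) m K₂] with x h₁ h₂
  calc ∫⁻ y, κ x y * ENNReal.ofReal (m x y) ∂μ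
      ≤ ∫⁻ y, c * (ENNReal.ofReal (|K₁ x y| * m x y) + ENNReal.ofReal (|K₂ y x| * m y x)) ∂μ :=
        lintegral_mono (kernel_mul_ofReal_le hm hκ x)
    _ = c * (∫⁻ y, ENNReal.ofReal (|K₁ x y| * m x y) ∂μ +
          ∫⁻ y, ENNReal.ofReal (|K₂ y x| * m y x) ∂μ) := by
        rw [lintegral_const_mul' _ _ hc,
          lintegral_add_left (f := fun y => ENNReal.ofReal (|K₁ x y| * m x y))
            ((hK₁ x).abs.mul hm_meas.of_uncurry_left).ennreal_ofReal]
    _ ≤ c * (amNorm μ m K₁ + amNorm μ m K₂) := by gcongr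

theorem ae_lintegral_kernel_le_right (hm_meas : Measurable (Function.uncurry m))
    (hm : ∀ x y, m x y = m y x) (hK₁ : ∀ y, Measurable fun x => K₁ x y) (hc : c ≠ ⊤)
    (hκ : ∀ x y, κ x y ≤ c * (ENNReal.ofReal |K₁ x y| + ENNReal.ofReal |K₂ y x|)) :
    ∀ᵐ y ∂μ, ∫⁻ x, κ x y * ENNReal.ofReal (m x y) ∂μ ≤
      c * (amNorm μ m K₁ + amNorm μ m K₂) := by
  filter_upwards [ae_lintegral_le_amNorm_right (μ := μ) m K₁,
    ae_lintegral_le_amNorm_left (μ := μ) m K₂] with y h₁ h₂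
  calc ∫⁻ x, κ x y * ENNReal.ofReal (m x y) ∂μ
      ≤ ∫⁻ x, c * (ENNReal.ofReal (|K₁ x y| * m x y) + ENNReal.ofReal (|K₂ y x| * m y x)) ∂μ :=
        lintegral_mono fun x => kernel_mul_ofReal_le hm hκ x y
    _ = c * (∫⁻ x, ENNReal.ofReal (|K₁ x y| * m x y) ∂μ +
          ∫⁻ x, ENNReal.ofReal (|K₂ y x| * m y x) ∂μ) := by
        rw [lintegral_const_mul' _ _ hc,
          lintegral_add_left (f := fun x => ENNReal.ofReal (|K₁ x y| * m x y))
            ((hK₁ y).abs.mul hm_meas.of_uncurry_right).ennreal_ofReal]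
    _ ≤ c * (amNorm μ m K₁ + amNorm μ m K₂) := by gcongr

end DominatedKernel

section Sampling

variable {X : Type*} {I : Type*} {R : X → X → ℂ} {U : I → Set X} {pt : I → X} {a : I → X → ℂ}

theorem tsum_sample_kernel_le {O : X → X → ℝ} (ha : ∀ i x, a i x ≠ 0 → x ∈ U i) {c₀ : ℝ≥0∞}
    {x : X} (ha_sum : ∑' i, ‖a i x‖ₑ ≤ c₀) {y : X}
    (hsample : ∀ i, x ∈ U i → ‖R (pt i) y‖ ≤ ‖R x y‖ + O y x) :
    ∑' i, ‖a i x‖ₑ * ‖R (pt i) y‖ₑ ≤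
      c₀ * (ENNReal.ofReal |‖R x y‖| + ENNReal.ofReal |O y x|) := by
  have hbound : ∀ i, ‖a i x‖ₑ * ‖R (pt i) y‖ₑ ≤
      ‖a i x‖ₑ * (ENNReal.ofReal |‖R x y‖| + ENNReal.ofReal |O y x|) := fun i => by
    rcases eq_or_ne (a i x) 0 with hai | hai
    · simp [hai]
    refine mul_le_mul_right ?_ _
    rw [← ofReal_norm, abs_norm]
    refine (ENNReal.ofReal_le_ofReal ?_).trans ENNReal.ofReal_add_le
    exact (hsample i (ha i x hai)).trans (add_le_add_right (le_abs_self _) _)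
  calc ∑' i, ‖a i x‖ₑ * ‖R (pt i) y‖ₑ
      ≤ ∑' i, ‖a i x‖ₑ * (ENNReal.ofReal |‖R x y‖| + ENNReal.ofReal |O y x|) :=
        ENNReal.tsum_le_tsum hbound
    _ ≤ c₀ * (ENNReal.ofReal |‖R x y‖| + ENNReal.ofReal |O y x|) := by
        rw [ENNReal.tsum_mul_right]; exact mul_le_mul_left ha_sum _

variable [MeasurableSpace X] {μ : Measure X}

theorem enorm_tsum_sample_le [Countable I] (hR : ∀ i, Measurable (R (pt i))) {F : X → ℂ}
    (hF : AEStronglyMeasurable F μ) (x : X) :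
    ‖∑' i, (∫ y, F y * R (pt i) y ∂μ) * a i x‖ₑ ≤
      ∫⁻ y, (∑' i, ‖a i x‖ₑ * ‖R (pt i) y‖ₑ) * ‖F y‖ₑ ∂μ := by
  calc ‖∑' i, (∫ y, F y * R (pt i) y ∂μ) * a i x‖ₑ
      ≤ ∑' i, ‖(∫ y, F y * R (pt i) y ∂μ) * a i x‖ₑ := enorm_tsum_le_tsum_enorm
    _ ≤ ∑' i, ∫⁻ y, ‖a i x‖ₑ * ‖R (pt i) y‖ₑ * ‖F y‖ₑ ∂μ := by
        refine ENNReal.tsum_le_tsum fun i => ?_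
        rw [enorm_mul, mul_comm]
        calc ‖a i x‖ₑ * ‖∫ y, F y * R (pt i) y ∂μ‖ₑ
            ≤ ‖a i x‖ₑ * ∫⁻ y, ‖F y * R (pt i) y‖ₑ ∂μ :=
              mul_le_mul_right (enorm_integral_le_lintegral_enorm _) _
          _ = ∫⁻ y, ‖a i x‖ₑ * ‖R (pt i) y‖ₑ * ‖F y‖ₑ ∂μ := by
              rw [← lintegral_const_mul' _ _ enorm_ne_top]
              refine lintegral_congr fun y => ?_
              rw [enorm_mul]
              ring
    _ = ∫⁻ y, (∑' i, ‖a i x‖ₑ * ‖R (pt i) y‖ₑ) * ‖F y‖ₑ ∂μ := by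
        rw [← lintegral_tsum (f := fun i y => ‖a i x‖ₑ * ‖R (pt i) y‖ₑ * ‖F y‖ₑ)
          fun i => ((hR i).enorm.const_mul _).aemeasurable.mul hF.enorm]
        simp_rw [ENNReal.tsum_mul_right]

theorem lpwNorm_tsum_sample_le [SFinite μ] [Countable I] {w : X → ℝ} (hw : Measurable w)
    (hw0 : ∀ x, 0 ≤ w x) {m : X → X → ℝ} (hm_meas : Measurable (Function.uncurry m))
    (hm : ∀ x y, m x y = m y x) (hwm : ∀ x y, w x ≤ m x y * w y)
    (hR : ∀ x, Measurable (R x)) (hR' : ∀ y, Measurable fun x => R x y) {O : X → X → ℝ}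
    (hsample : ∀ i x y, x ∈ U i → ‖R (pt i) y‖ ≤ ‖R x y‖ + O y x)
    (ha_meas : ∀ i, Measurable (a i)) (ha : ∀ i x, a i x ≠ 0 → x ∈ U i) {c₀ : ℝ≥0∞}
    (hc₀ : c₀ ≠ ⊤) (ha_sum : ∀ x, ∑' i, ‖a i x‖ₑ ≤ c₀) {F : X → ℂ}
    (hF : AEStronglyMeasurable F μ) {p : ℝ≥0∞} (hp : 1 ≤ p) :
    lpwNorm μ w p (fun x => ∑' i, (∫ y, F y * R (pt i) y ∂μ) * a i x) ≤
      c₀ * (amNorm μ m (fun x y => ‖R x y‖) + amNorm μ m O) * lpwNorm μ w p F := by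
  have hκ_meas : Measurable (Function.uncurry fun x y => ∑' i, ‖a i x‖ₑ * ‖R (pt i) y‖ₑ) :=
    Measurable.tsum fun i =>
      ((ha_meas i).enorm.comp measurable_fst).mul ((hR (pt i)).enorm.comp measurable_snd)
  have hκ : ∀ x y, ∑' i, ‖a i x‖ₑ * ‖R (pt i) y‖ₑ ≤
      c₀ * (ENNReal.ofReal |‖R x y‖| + ENNReal.ofReal |O y x|) := fun x y =>
    tsum_sample_kernel_le ha (ha_sum x) fun i hx => hsample i x y hx
  exact lpwNorm_le_of_enorm_le_lintegral_kernel hw hw0 hm_meas hwm hκ_meas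
    (ae_lintegral_kernel_le_left hm_meas hm (fun x => (hR x).norm) hc₀ hκ)
    (ae_lintegral_kernel_le_right hm_meas hm (fun y => (hR' y).norm) hc₀ hκ) hF
    (enorm_tsum_sample_le (fun i => hR (pt i)) hF) hp

end Sampling

theorem mw_comm {X : Type*} (w : X → ℝ) (x y : X) : mw w x y = mw w y x := max_comm _ _

theorem le_mw_mul {X : Type*} {w : X → ℝ} (x : X) {y : X} (hy : 0 < w y) :
    w x ≤ mw w x y * w y :=
  (div_mul_cancel₀ (w x) hy.ne').symm.le.trans
    (mul_le_mul_of_nonneg_right (le_max_left _ _) hy.le)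

theorem measurable_mw {X : Type*} [MeasurableSpace X] {w : X → ℝ} (hw : Measurable w) :
    Measurable (Function.uncurry (mw w)) :=
  ((hw.comp measurable_fst).div (hw.comp measurable_snd)).max
    ((hw.comp measurable_snd).div (hw.comp measurable_fst))

section Oscillation

variable {X I : Type*} [TopologicalSpace X] {R : X → X → ℂ} {U : I → Set X}

-- `oscU` is an `sSup` in `ℝ`, hence junk unless the set of oscillations is bounded above: this is
-- what relative compactness and finite overlap are needed for.
theorem norm_sub_le_oscU {x y z : X} {i : I} (hR : Continuous (R x))
    (hU : ∀ j, IsCompact (closure (U j))) (hfin : {j | y ∈ U j}.Finite) (hy : y ∈ U i)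
    (hz : z ∈ U i) : ‖R x y - R x z‖ ≤ oscU R U x y := by
  have hQ : (⋃ (j : I) (_ : y ∈ U j), U j) ⊆ ⋃ j ∈ {j | y ∈ U j}, closure (U j) :=
    Set.biUnion_mono le_rfl fun _ _ => subset_closure
  have hbdd : BddAbove ((fun z => ‖R x y - R x z‖) '' ⋃ (j : I) (_ : y ∈ U j), U j) :=
    ((hfin.isCompact_biUnion fun j _ => hU j).image
      (continuous_const.sub hR).norm).bddAbove.mono (Set.image_mono hQ)
  exact le_csSup hbdd ⟨z, Set.mem_biUnion hy hz, rfl⟩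

-- The oscillation is taken in the second variable, so Hermitian symmetry is what lets it
-- control a change of the first variable.
theorem norm_le_norm_add_oscU (hherm : ∀ x y, R y x = starRingEnd ℂ (R x y))
    (hR : ∀ x, Continuous (R x)) (hU : ∀ j, IsCompact (closure (U j)))
    (hfin : ∀ x, {j | x ∈ U j}.Finite) {i : I} {x z : X} (hx : x ∈ U i) (hz : z ∈ U i)
    (y : X) : ‖R z y‖ ≤ ‖R x y‖ + oscU R U y x := by
  have hosc := norm_sub_le_oscU (hR y) hU (hfin x) hx hz
  have hswap : ‖R z y - R x y‖ = ‖R y x - R y z‖ := by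
    rw [hherm y z, hherm y x, ← map_sub, Complex.norm_conj, norm_sub_rev]
  linarith [norm_sub_norm_le (R z y) (R x y)]

end Oscillation

namespace ModCover

variable {X I : Type*} [TopologicalSpace X] [MeasurableSpace X] {μ : Measure X}
  (𝒰 : ModCover X μ I)

theorem exists_mem (x : X) : ∃ j, x ∈ 𝒰.U j :=
  Set.mem_iUnion.1 (𝒰.covers ▸ Set.mem_univ x)

theorem setOf_mem_subset {x : X} {j : I} (hj : x ∈ 𝒰.U j) :
    {i | x ∈ 𝒰.U i} ⊆ {i | (𝒰.U i ∩ 𝒰.U j).Nonempty} :=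
  fun _ hi => ⟨x, hi, hj⟩

theorem finite_setOf_mem (x : X) : {i | x ∈ 𝒰.U i}.Finite :=
  let ⟨j, hj⟩ := 𝒰.exists_mem x
  (𝒰.overlapFin j).subset (𝒰.setOf_mem_subset hj)

theorem tsum_enorm_indicator_le (x : X) :
    ∑' i, ‖(𝒰.U i).indicator (fun _ => (1 : ℂ)) x‖ₑ ≤ 𝒰.N := by
  obtain ⟨j, hj⟩ := 𝒰.exists_mem x
  have hind : ∀ i, ‖(𝒰.U i).indicator (fun _ => (1 : ℂ)) x‖ₑ =
      {i | x ∈ 𝒰.U i}.indicator (fun _ => (1 : ℝ≥0∞)) i := fun i => by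
    by_cases hi : x ∈ 𝒰.U i <;> simp [hi]
  rw [tsum_congr hind, ← tsum_subtype, ENNReal.tsum_set_one]
  calc (({i | x ∈ 𝒰.U i}.encard : ℕ∞) : ℝ≥0∞)
      ≤ (({i | (𝒰.U i ∩ 𝒰.U j).Nonempty}.encard : ℕ∞) : ℝ≥0∞) := by
        exact_mod_cast Set.encard_le_encard (𝒰.setOf_mem_subset hj)
    _ ≤ 𝒰.N := by
        rw [← (𝒰.overlapFin j).cast_ncard_eq]
        exact_mod_cast 𝒰.overlapBound j

end ModCover

theorem tsum_enorm_ofReal_eq_one {I : Type*} {c : I → ℝ} (hc : ∀ i, 0 ≤ c i)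
    (h : HasSum c 1) : ∑' i, ‖(c i : ℂ)‖ₑ = 1 := by
  simp_rw [← ofReal_norm, Complex.norm_real, Real.norm_of_nonneg (hc _)]
  rw [← ENNReal.ofReal_tsum_of_nonneg hc h.summable, h.tsum_eq, ENNReal.ofReal_one]

section Frame

variable {X H : Type*} [NormedAddCommGroup H] [InnerProductSpace ℂ H]

theorem isSymmetric_of_inner_eq_integral [MeasurableSpace X] {μ : Measure X} {ψ : X → H}
    {S : H →ₗ[ℂ] H} (hS : ∀ f g : H, ⟪g, S f⟫ = ∫ x, ⟪ψ x, f⟫ * ⟪g, ψ x⟫ ∂μ) :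
    S.IsSymmetric := fun f g => by
  rw [← inner_conj_symm, hS f g, hS g f, ← integral_conj]
  simp_rw [map_mul, inner_conj_symm, mul_comm]

theorem LinearMap.IsSymmetric.of_rightInverse {S T : H →ₗ[ℂ] H} (hS : S.IsSymmetric)
    (hST : Function.RightInverse T S) : T.IsSymmetric := fun f g => by
  conv_lhs => rw [← hST g]
  rw [← hS, hST]

theorem continuous_inner_apply [TopologicalSpace X] {ψ : X → H}
    (hcont : ∀ f : H, Continuous fun x => ⟪ψ x, f⟫) (u : H) : Continuous fun y => ⟪u, ψ y⟫ :=
  (Complex.continuous_conj.comp (hcont u)).congr fun _ => inner_conj_symm _ _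

theorem continuous_inner_map_apply [TopologicalSpace X] {ψ : X → H}
    (hcont : ∀ f : H, Continuous fun x => ⟪ψ x, f⟫) {T : H →ₗ[ℂ] H} (hT : T.IsSymmetric)
    (y : H) : Continuous fun x => ⟪T (ψ x), y⟫ :=
  (hcont (T y)).congr fun _ => (hT _ _).symm

end Frame

theorem sampling_estimates_on_RY_general
    {X : Type*} [TopologicalSpace X]
    [SigmaCompactSpace X] [MeasurableSpace X] [BorelSpace X]
    (μ : MeasureTheory.Measure X) [μ.Regular]
    {H : Type*} [NormedAddCommGroup H] [InnerProductSpace ℂ H]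
    (ψ : X → H)
    (hcont : ∀ f : H, Continuous fun x => ⟪ψ x, f⟫)
    (S : H →L[ℂ] H)
    (hS : ∀ f g : H, ⟪g, S f⟫ = ∫ x, ⟪ψ x, f⟫ * ⟪g, ψ x⟫ ∂μ)
    (Sinv : H →L[ℂ] H)
    (hright : ∀ f, S (Sinv f) = f)
    (w : X → ℝ) (hw : Continuous w) (hwpos : ∀ x, 0 < w x)
    {I : Type*} [Countable I]
    (𝒰 : ModCover X μ I)
    (CmU : ℝ)
    (δ : ℝ)
    (hosc : amNorm μ (mw w) (oscU (fun x y => ⟪Sinv (ψ x), ψ y⟫) 𝒰.U) <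
      ENNReal.ofReal δ)
    -- sampling points and a partition of unity subordinate to `U`
    (pt : I → X) (hpt : ∀ i, pt i ∈ 𝒰.U i)
    (φ : I → X → ℝ) (hφmeas : ∀ i, Measurable (φ i))
    (hφ0 : ∀ i x, 0 ≤ φ i x)
    (hφsupp : ∀ i, Function.support (φ i) ⊆ 𝒰.U i)
    (hφsum : ∀ x, HasSum (fun i => φ i x) 1) :
    ∀ p : ℝ≥0∞, 1 ≤ p →
      ∀ F : X → ℂ, AEStronglyMeasurable F μ → lpwNorm μ w p F < ⊤ →
        F =ᵐ[μ] (fun x => ∫ y, F y * ⟪Sinv (ψ x), ψ y⟫ ∂μ) →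
        lpwNorm μ w p (fun x => ∑' i, (∫ y, F y * ⟪Sinv (ψ (pt i)), ψ y⟫ ∂μ) *
            (𝒰.U i).indicator (fun _ => (1 : ℂ)) x) ≤
          (𝒰.N : ℝ≥0∞) *
            max (ENNReal.ofReal CmU * amNorm μ (mw w) (fun x y => ‖⟪Sinv (ψ x), ψ y⟫‖))
              (amNorm μ (mw w) (fun x y => ‖⟪Sinv (ψ x), ψ y⟫‖) + ENNReal.ofReal δ) *
            lpwNorm μ w p F ∧
        lpwNorm μ w p (fun x => ∑' i, (∫ y, F y * ⟪Sinv (ψ (pt i)), ψ y⟫ ∂μ) *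
            (φ i x : ℂ)) ≤
          max (ENNReal.ofReal CmU * amNorm μ (mw w) (fun x y => ‖⟪Sinv (ψ x), ψ y⟫‖))
              (amNorm μ (mw w) (fun x y => ‖⟪Sinv (ψ x), ψ y⟫‖) + ENNReal.ofReal δ) *
            lpwNorm μ w p F := by
  intro p hp F hF _ _
  have hT : (Sinv : H →ₗ[ℂ] H).IsSymmetric :=
    (isSymmetric_of_inner_eq_integral (S := (S : H →ₗ[ℂ] H)) hS).of_rightInverse hright
  have hherm : ∀ x y, ⟪Sinv (ψ y), ψ x⟫ = starRingEnd ℂ ⟪Sinv (ψ x), ψ y⟫ := fun x y =>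
    (hT.conj_inner_sym (ψ x) (ψ y)).symm
  set A := amNorm μ (mw w) (fun x y => ‖⟪Sinv (ψ x), ψ y⟫‖)
  have hσ : A + amNorm μ (mw w) (oscU (fun x y => ⟪Sinv (ψ x), ψ y⟫) 𝒰.U) ≤
      max (ENNReal.ofReal CmU * A) (A + ENNReal.ofReal δ) :=
    le_max_of_le_right (add_le_add le_rfl hosc.le)
  have hsampling := fun a => lpwNorm_tsum_sample_le (μ := μ) (a := a)
    (R := fun x y => ⟪Sinv (ψ x), ψ y⟫) hw.measurable
    (fun x => (hwpos x).le) (measurable_mw hw.measurable) (mw_comm w)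
    (fun x y => le_mw_mul x (hwpos y)) (fun x => (continuous_inner_apply hcont _).measurable)
    (fun y => (continuous_inner_map_apply hcont hT (ψ y)).measurable)
    fun i x y hx => norm_le_norm_add_oscU hherm (fun _ => continuous_inner_apply hcont _)
      𝒰.relCompact 𝒰.finite_setOf_mem hx (hpt i) y
  constructor
  · exact (hsampling (fun i => (𝒰.U i).indicator fun _ => 1)
      (fun i => measurable_const.indicator (𝒰.measU i))
      (fun i x => Set.mem_of_indicator_ne_zero) (natCast_ne_top _) 𝒰.tsum_enorm_indicator_le
      hF hp).trans (by gcongr)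
  · refine (hsampling (fun i x => φ i x) (fun i => Complex.measurable_ofReal.comp (hφmeas i))
      (fun i x h => hφsupp i (Complex.ofReal_ne_zero.1 h)) one_ne_top
      (fun x => (tsum_enorm_ofReal_eq_one (hφ0 · x) (hφsum x)).le) hF hp).trans ?_
    rw [one_mul]
    gcongr

/-- Sampling estimates for functions in the reproducing kernel subspace
`R(L^p_w)`:  `‖∑ᵢ R(F)(xᵢ) χ_{Uᵢ}‖_{L^p_w} ≤ N·σ·‖F‖_{L^p_w}` and
`‖∑ᵢ R(F)(xᵢ) φᵢ‖_{L^p_w} ≤ σ·‖F‖_{L^p_w}`, with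
`σ = max{C_{m,U}‖R‖_{A_m}, ‖R‖_{A_m} + δ}`. -/
theorem sampling_estimates_on_RY
    {X : Type*} [TopologicalSpace X] [T2Space X] [LocallyCompactSpace X]
    [SigmaCompactSpace X] [MeasurableSpace X] [BorelSpace X]
    (μ : MeasureTheory.Measure X) [μ.Regular] [μ.IsOpenPosMeasure]
    {H : Type*} [NormedAddCommGroup H] [InnerProductSpace ℂ H] [CompleteSpace H]
    [TopologicalSpace.SeparableSpace H]
    (ψ : X → H)
    (hcont : ∀ f : H, Continuous fun x => ⟪ψ x, f⟫)
    (C₁ C₂ : ℝ) (hC₁ : 0 < C₁) (hC₁₂ : C₁ ≤ C₂)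
    (hInt : ∀ f : H, Integrable (fun x => ‖⟪ψ x, f⟫‖ ^ 2) μ)
    (hlow : ∀ f : H, C₁ * ‖f‖ ^ 2 ≤ ∫ x, ‖⟪ψ x, f⟫‖ ^ 2 ∂μ)
    (hup : ∀ f : H, ∫ x, ‖⟪ψ x, f⟫‖ ^ 2 ∂μ ≤ C₂ * ‖f‖ ^ 2)
    (S : H →L[ℂ] H)
    (hS : ∀ f g : H, ⟪g, S f⟫ = ∫ x, ⟪ψ x, f⟫ * ⟪g, ψ x⟫ ∂μ)
    (Sinv : H →L[ℂ] H)
    (hleft : ∀ f, Sinv (S f) = f) (hright : ∀ f, S (Sinv f) = f)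
    (w : X → ℝ) (hw : Continuous w) (hwpos : ∀ x, 0 < w x)
    (hR : amNorm μ (mw w) (fun x y => ‖⟪Sinv (ψ x), ψ y⟫‖) < ⊤)
    {I : Type*} [Countable I]
    (𝒰 : ModCover X μ I)
    (CmU : ℝ) (hcover : ∀ i, ∀ x ∈ 𝒰.U i, ∀ y ∈ 𝒰.U i, mw w x y ≤ CmU)
    (δ : ℝ) (hδ : 0 < δ)
    (hosc : amNorm μ (mw w) (oscU (fun x y => ⟪Sinv (ψ x), ψ y⟫) 𝒰.U) <
      ENNReal.ofReal δ)
    -- sampling points and a partition of unity subordinate to `U`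
    (pt : I → X) (hpt : ∀ i, pt i ∈ 𝒰.U i)
    (φ : I → X → ℝ) (hφmeas : ∀ i, Measurable (φ i))
    (hφ0 : ∀ i x, 0 ≤ φ i x) (hφ1 : ∀ i x, φ i x ≤ 1)
    (hφsupp : ∀ i, Function.support (φ i) ⊆ 𝒰.U i)
    (hφsum : ∀ x, HasSum (fun i => φ i x) 1) :
    ∀ p : ℝ≥0∞, 1 ≤ p →
      ∀ F : X → ℂ, AEStronglyMeasurable F μ → lpwNorm μ w p F < ⊤ →
        F =ᵐ[μ] (fun x => ∫ y, F y * ⟪Sinv (ψ x), ψ y⟫ ∂μ) →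
        lpwNorm μ w p (fun x => ∑' i, (∫ y, F y * ⟪Sinv (ψ (pt i)), ψ y⟫ ∂μ) *
            (𝒰.U i).indicator (fun _ => (1 : ℂ)) x) ≤
          (𝒰.N : ℝ≥0∞) *
            max (ENNReal.ofReal CmU * amNorm μ (mw w) (fun x y => ‖⟪Sinv (ψ x), ψ y⟫‖))
              (amNorm μ (mw w) (fun x y => ‖⟪Sinv (ψ x), ψ y⟫‖) + ENNReal.ofReal δ) *
            lpwNorm μ w p F ∧
        lpwNorm μ w p (fun x => ∑' i, (∫ y, F y * ⟪Sinv (ψ (pt i)), ψ y⟫ ∂μ) *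
            (φ i x : ℂ)) ≤
          max (ENNReal.ofReal CmU * amNorm μ (mw w) (fun x y => ‖⟪Sinv (ψ x), ψ y⟫‖))
              (amNorm μ (mw w) (fun x y => ‖⟪Sinv (ψ x), ψ y⟫‖) + ENNReal.ofReal δ) *
            lpwNorm μ w p F :=
  sampling_estimates_on_RY_general μ ψ hcont S hS Sinv hright w hw hwpos 𝒰 CmU δ hosc pt hpt φ
    hφmeas hφ0 hφsupp hφsum
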